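/- arXiv:1609.06825 — 6 statements merged into one kernel-verified Lean document; each statement's English description precedes it below -/
import Mathlib

section
/- Let f : 2^[n] → ℝ≥0 be a nonnegative, monotone non-decreasing, submodular set function. For any x ∈ [0,1]^n and any probability distribution p on 2^[n] whose marginals satisfy Pr_{S~p}[i ∈ S] = x_i for all i ∈ [n], we have E_{S~p}[f(S)] ≤ (e/(e-1)) · E_{S~p_x^I}[f(S)], where p_x^I is the independent distribution with marginals x. -/
open Finset

/-- The independent distribution `p_x^I` with marginals `x`. -/
noncomputable def indepDist {n : ℕ} (x : Fin n → ℝ) (S : Finset (Fin n)) : ℝ :=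
  (∏ i ∈ S, x i) * ∏ i ∈ Sᶜ, (1 - x i)

section CorrGap

variable {n : ℕ}

lemma indep_eq_prod (y : Fin n → ℝ) (S : Finset (Fin n)) :
    indepDist y S = ∏ j : Fin n, (if j ∈ S then y j else 1 - y j) := by
  rw [Finset.prod_ite]
  simp [indepDist, Finset.filter_mem_eq_inter, Finset.compl_eq_univ_sdiff,
    Finset.filter_not]

lemma indep_sum (y : Fin n → ℝ) : ∑ S : Finset (Fin n), indepDist y S = 1 := by
  have h := Finset.prod_add y (fun i => 1 - y i) (univ : Finset (Fin n))
  simp only [Finset.powerset_univ] at h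
  have h2 : ∀ S : Finset (Fin n), indepDist y S
      = (∏ i ∈ S, y i) * ∏ i ∈ univ \ S, (1 - y i) := by
    intro S; rw [indepDist, Finset.compl_eq_univ_sdiff]
  simp only [h2]
  rw [← h]
  simp

lemma indep_nonneg {y : Fin n → ℝ} (hy : ∀ i, y i ∈ Set.Icc (0:ℝ) 1)
    (S : Finset (Fin n)) : 0 ≤ indepDist y S := by
  apply mul_nonneg
  · exact Finset.prod_nonneg fun i _ => (hy i).1
  · exact Finset.prod_nonneg fun i _ => by linarith [(hy i).2]

/-- splitting a sum over all subsets by membership of `i`. -/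
lemma sum_split (i : Fin n) (g : Finset (Fin n) → ℝ) :
    ∑ S : Finset (Fin n), g S
      = ∑ S ∈ univ.filter (fun S : Finset (Fin n) => i ∉ S), (g S + g (insert i S)) := by
  rw [← Finset.sum_filter_add_sum_filter_not univ (fun S : Finset (Fin n) => i ∉ S) g,
    Finset.sum_add_distrib]
  congr 1
  apply Finset.sum_nbij' (fun S => S.erase i) (fun S => insert i S)
  · intro a ha
    simp only [Finset.mem_filter, Finset.mem_univ, true_and, not_not] at ha ⊢
    exact Finset.notMem_erase i a
  · intro a ha
    simp only [Finset.mem_filter, Finset.mem_univ, true_and, not_not] at ha ⊢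
    exact Finset.mem_insert_self i a
  · intro a ha
    simp only [Finset.mem_filter, Finset.mem_univ, true_and, not_not] at ha
    exact Finset.insert_erase ha
  · intro a ha
    simp only [Finset.mem_filter, Finset.mem_univ, true_and] at ha
    exact Finset.erase_insert ha
  · intro a ha
    simp only [Finset.mem_filter, Finset.mem_univ, true_and, not_not] at ha
    rw [Finset.insert_erase ha]

/-- submodularity: sum of singleton marginals bounds the union marginal. -/
lemma submod_marginals (f : Finset (Fin n) → ℝ)
    (hmono : ∀ S T : Finset (Fin n), S ⊆ T → f S ≤ f T)
    (hsub : ∀ S T : Finset (Fin n), f (S ∪ T) + f (S ∩ T) ≤ f S + f T)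
    (T S : Finset (Fin n)) :
    f (S ∪ T) ≤ f S + ∑ i ∈ T, (f (insert i S) - f S) := by
  induction T using Finset.induction_on with
  | empty => simp
  | @insert a T' ha ih =>
    have key := hsub (S ∪ T') (insert a S)
    have h1 : (S ∪ T') ∪ insert a S = S ∪ insert a T' := by
      ext b; simp; tauto
    have h2 : S ⊆ (S ∪ T') ∩ insert a S := by
      intro b hb; simp [hb]
    have h3 : f S ≤ f ((S ∪ T') ∩ insert a S) := hmono _ _ h2
    rw [h1] at key
    rw [Finset.sum_insert ha]
    linarith

end CorrGap

/-- Correlation gap bound (Agrawal et al.): for a nonnegative monotone submodular `f`,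
any distribution `p` on `2^[n]` with marginals `x` satisfies
`E_{S~p}[f(S)] ≤ (e/(e-1)) · E_{S~p_x^I}[f(S)]`. -/
theorem correlation_gap {n : ℕ} (f : Finset (Fin n) → ℝ)
    (hnonneg : ∀ S : Finset (Fin n), 0 ≤ f S)
    (hmono : ∀ S T : Finset (Fin n), S ⊆ T → f S ≤ f T)
    (hsub : ∀ S T : Finset (Fin n), f (S ∪ T) + f (S ∩ T) ≤ f S + f T)
    (x : Fin n → ℝ) (hx : ∀ i, x i ∈ Set.Icc (0 : ℝ) 1)
    (p : Finset (Fin n) → ℝ)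
    (hp0 : ∀ S, 0 ≤ p S)
    (hp1 : ∑ S : Finset (Fin n), p S = 1)
    (hmarg : ∀ i : Fin n, ∑ S : Finset (Fin n), (if i ∈ S then p S else 0) = x i) :
    ∑ S : Finset (Fin n), p S * f S ≤
      (Real.exp 1 / (Real.exp 1 - 1)) * ∑ S : Finset (Fin n), indepDist x S * f S := by
  classical
  set C : ℝ := ∑ S : Finset (Fin n), p S * f S with hC
  -- the path and its expectation
  set q : ℝ → Finset (Fin n) → ℝ := fun t S => indepDist (fun j => t * x j) S with hq
  set φ : ℝ → ℝ := fun t => ∑ S : Finset (Fin n), q t S * f S with hφ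
  -- derivative summand
  set d : ℝ → Fin n → Finset (Fin n) → ℝ := fun t i S =>
    (∏ j ∈ (univ : Finset (Fin n)).erase i,
      (if j ∈ S then t * x j else 1 - t * x j)) * (if i ∈ S then x i else -x i) with hd
  set ψ : ℝ → ℝ := fun t =>
    ∑ i : Fin n, x i * ∑ S : Finset (Fin n), q t S * (f (insert i S) - f (S.erase i)) with hψ
  -- derivative of q
  have hqder : ∀ (t : ℝ) (S : Finset (Fin n)),
      HasDerivAt (fun t => q t S) (∑ i : Fin n, d t i S) t := by
    intro t S
    have heq : ∀ t : ℝ, q t S = ∏ j : Fin n, (if j ∈ S then t * x j else 1 - t * x j) := by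
      intro t; simp only [hq]; exact indep_eq_prod _ S
    rw [show (fun t => q t S) = fun t => ∏ j : Fin n,
        (if j ∈ S then t * x j else 1 - t * x j) from funext heq]
    have hder : ∀ i ∈ (univ : Finset (Fin n)),
        HasDerivAt (fun t : ℝ => if i ∈ S then t * x i else 1 - t * x i)
          (if i ∈ S then x i else -x i) t := by
      intro i _
      by_cases hi : i ∈ S
      · simpa [hi] using (hasDerivAt_mul_const (x i) (x := t))
      · simpa [hi] using ((hasDerivAt_mul_const (x i) (x := t)).const_sub 1)
    have h := HasDerivAt.fun_finsetProd hder
    refine h.congr_deriv ?_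
    simp only [hd, smul_eq_mul]
  -- the reorganized derivative: φ' = ψ
  have hident : ∀ t : ℝ, ∑ S : Finset (Fin n), (∑ i : Fin n, d t i S) * f S = ψ t := by
    intro t
    simp only [hψ]
    simp only [Finset.sum_mul]
    rw [Finset.sum_comm]
    apply Finset.sum_congr rfl
    intro i _
    rw [Finset.mul_sum]
    rw [sum_split i (fun S => d t i S * f S), sum_split i
      (fun S => x i * (q t S * (f (insert i S) - f (S.erase i))))]
    apply Finset.sum_congr rfl
    intro S hS
    simp only [Finset.mem_filter, Finset.mem_univ, true_and] at hS
    have hpe : ∀ j ∈ (univ : Finset (Fin n)).erase i,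
        (if j ∈ insert i S then t * x j else 1 - t * x j)
          = (if j ∈ S then t * x j else 1 - t * x j) := by
      intro j hj
      have hji : j ≠ i := (Finset.mem_erase.mp hj).1
      simp [Finset.mem_insert, hji]
    have hP : (∏ j ∈ (univ : Finset (Fin n)).erase i,
        (if j ∈ insert i S then t * x j else 1 - t * x j))
        = ∏ j ∈ (univ : Finset (Fin n)).erase i,
          (if j ∈ S then t * x j else 1 - t * x j) :=
      Finset.prod_congr rfl hpe
    have hqS : q t S = (1 - t * x i) * ∏ j ∈ (univ : Finset (Fin n)).erase i,
        (if j ∈ S then t * x j else 1 - t * x j) := by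
      simp only [hq]
      rw [indep_eq_prod]
      rw [← Finset.mul_prod_erase (univ : Finset (Fin n))
        (fun j => if j ∈ S then t * x j else 1 - t * x j) (Finset.mem_univ i)]
      simp [hS]
    have hqiS : q t (insert i S) = (t * x i) * ∏ j ∈ (univ : Finset (Fin n)).erase i,
        (if j ∈ S then t * x j else 1 - t * x j) := by
      simp only [hq]
      rw [indep_eq_prod]
      rw [← Finset.mul_prod_erase (univ : Finset (Fin n))
        (fun j => if j ∈ insert i S then t * x j else 1 - t * x j) (Finset.mem_univ i)]
      rw [hP]
      simp
    have he1 : (insert i S).erase i = S := Finset.erase_insert hS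
    have he2 : S.erase i = S := Finset.erase_eq_of_notMem hS
    have hd1 : d t i S = (∏ j ∈ (univ : Finset (Fin n)).erase i,
        (if j ∈ S then t * x j else 1 - t * x j)) * (-x i) := by
      simp only [hd]; simp [hS]
    have hd2 : d t i (insert i S) = (∏ j ∈ (univ : Finset (Fin n)).erase i,
        (if j ∈ S then t * x j else 1 - t * x j)) * (x i) := by
      simp only [hd]; rw [hP]; simp
    have he3 : insert i (insert i S) = insert i S := by simp
    rw [hd1, hd2, hqS, hqiS, he1, he2, he3]
    ring
  -- key differential inequality on [0,1]
  have hkey : ∀ t ∈ Set.Icc (0:ℝ) 1, C - φ t ≤ ψ t := by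
    intro t ht
    have hy : ∀ j, (t * x j) ∈ Set.Icc (0:ℝ) 1 := by
      intro j
      constructor
      · exact mul_nonneg ht.1 (hx j).1
      · calc t * x j ≤ 1 * 1 := by
              apply mul_le_mul ht.2 (hx j).2 (hx j).1 zero_le_one
          _ = 1 := by ring
    have hq0 : ∀ S, 0 ≤ q t S := fun S => indep_nonneg hy S
    -- step 1 : drop the erase
    have step1 : ∀ i : Fin n,
        ∑ S : Finset (Fin n), q t S * (f (insert i S) - f S)
          ≤ ∑ S : Finset (Fin n), q t S * (f (insert i S) - f (S.erase i)) := by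
      intro i
      apply Finset.sum_le_sum
      intro S _
      apply mul_le_mul_of_nonneg_left _ (hq0 S)
      have := hmono (S.erase i) S (Finset.erase_subset i S)
      linarith
    have step1' : ∑ i : Fin n, x i * ∑ S : Finset (Fin n), q t S * (f (insert i S) - f S)
        ≤ ψ t := by
      simp only [hψ]
      apply Finset.sum_le_sum
      intro i _
      exact mul_le_mul_of_nonneg_left (step1 i) (hx i).1
    -- step 2+3 : per S bound using marginals and submodularity
    have step2 : ∀ S : Finset (Fin n),
        C - f S ≤ ∑ i : Fin n, x i * (f (insert i S) - f S) := by
      intro S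
      have hsw : ∑ i : Fin n, x i * (f (insert i S) - f S)
          = ∑ T : Finset (Fin n), p T * ∑ i ∈ T, (f (insert i S) - f S) := by
        have : ∀ i : Fin n, x i * (f (insert i S) - f S)
            = ∑ T : Finset (Fin n), (if i ∈ T then p T * (f (insert i S) - f S) else 0) := by
          intro i
          rw [← hmarg i, Finset.sum_mul]
          apply Finset.sum_congr rfl
          intro T _
          split_ifs <;> simp
        rw [Finset.sum_congr rfl (fun i _ => this i), Finset.sum_comm]
        apply Finset.sum_congr rfl
        intro T _
        rw [Finset.mul_sum]
        rw [Finset.sum_ite_mem]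
        simp [Finset.univ_inter]
      rw [hsw]
      have hTS : ∀ T : Finset (Fin n),
          p T * (f T - f S) ≤ p T * ∑ i ∈ T, (f (insert i S) - f S) := by
        intro T
        apply mul_le_mul_of_nonneg_left _ (hp0 T)
        have h1 := submod_marginals f hmono hsub T S
        have h2 : f T ≤ f (S ∪ T) := hmono _ _ Finset.subset_union_right
        linarith
      have hCe : ∑ T : Finset (Fin n), p T * (f T - f S) = C - f S := by
        simp only [mul_sub]
        rw [Finset.sum_sub_distrib, ← Finset.sum_mul, hp1, hC]
        ring
      calc C - f S = ∑ T : Finset (Fin n), p T * (f T - f S) := hCe.symm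
        _ ≤ _ := Finset.sum_le_sum fun T _ => hTS T
    -- combine
    have step3 : C - φ t ≤ ∑ S : Finset (Fin n), q t S *
        ∑ i : Fin n, x i * (f (insert i S) - f S) := by
      have hmul : ∀ S : Finset (Fin n), q t S * (C - f S) ≤ q t S *
          ∑ i : Fin n, x i * (f (insert i S) - f S) := fun S =>
        mul_le_mul_of_nonneg_left (step2 S) (hq0 S)
      have hsum : ∑ S : Finset (Fin n), q t S * (C - f S) = C - φ t := by
        have hn : ∑ S : Finset (Fin n), q t S = 1 := indep_sum _
        simp only [hφ]
        simp only [mul_sub]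
        rw [Finset.sum_sub_distrib, ← Finset.sum_mul, hn]
        ring
      rw [← hsum]
      exact Finset.sum_le_sum fun S _ => hmul S
    have hswap : ∑ S : Finset (Fin n), q t S * ∑ i : Fin n, x i * (f (insert i S) - f S)
        = ∑ i : Fin n, x i * ∑ S : Finset (Fin n), q t S * (f (insert i S) - f S) := by
      simp only [Finset.mul_sum]
      rw [Finset.sum_comm]
      apply Finset.sum_congr rfl
      intro i _
      apply Finset.sum_congr rfl
      intro S _
      ring
    calc C - φ t ≤ _ := step3
      _ = _ := hswap
      _ ≤ ψ t := step1'
  -- φ has derivative ψ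
  have hφder : ∀ t : ℝ, HasDerivAt φ (ψ t) t := by
    intro t
    rw [← hident t]
    simp only [hφ]
    apply HasDerivAt.fun_sum
    intro S _
    exact (hqder t S).mul_const (f S)
  -- Gronwall
  set g : ℝ → ℝ := fun t => Real.exp t * (φ t - C) with hg
  have hgder : ∀ t : ℝ, HasDerivAt g (Real.exp t * (φ t - C) + Real.exp t * ψ t) t := by
    intro t
    exact (Real.hasDerivAt_exp t).mul ((hφder t).sub_const C)
  have hmonog : MonotoneOn g (Set.Icc (0:ℝ) 1) := by
    apply monotoneOn_of_deriv_nonneg (convex_Icc 0 1)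
    · apply Continuous.continuousOn
      apply Continuous.mul Real.continuous_exp
      apply Continuous.sub _ continuous_const
      have hdiff : Differentiable ℝ φ := fun t => (hφder t).differentiableAt
      exact hdiff.continuous
    · intro t _
      exact ((hgder t).differentiableAt).differentiableWithinAt
    · intro t ht
      rw [interior_Icc] at ht
      rw [(hgder t).deriv]
      have h1 := hkey t ⟨le_of_lt ht.1, le_of_lt ht.2⟩
      have h2 := Real.exp_pos t
      nlinarith
  have h01 : g 0 ≤ g 1 := hmonog (Set.mem_Icc.mpr ⟨le_refl 0, zero_le_one⟩)
    (Set.mem_Icc.mpr ⟨zero_le_one, le_refl 1⟩) zero_le_one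
  have hφ0 : 0 ≤ φ 0 := by
    simp only [hφ]
    apply Finset.sum_nonneg
    intro S _
    apply mul_nonneg _ (hnonneg S)
    apply indep_nonneg _ S
    intro j
    simp
  have hφ1 : φ 1 = ∑ S : Finset (Fin n), indepDist x S * f S := by
    simp only [hφ]
    apply Finset.sum_congr rfl
    intro S _
    congr 1
    simp only [hq]
    congr 1
    funext j
    ring
  have he : (1:ℝ) < Real.exp 1 := by
    have := Real.add_one_le_exp (1:ℝ)
    linarith
  have hg0 : -C ≤ g 0 := by
    simp only [hg]; simp; linarith
  have hg1 : g 1 = Real.exp 1 * (φ 1 - C) := by simp only [hg]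
  rw [← hφ1]
  rw [div_mul_eq_mul_div, le_div_iff₀ (by linarith : (0:ℝ) < Real.exp 1 - 1)]
  have : -C ≤ Real.exp 1 * (φ 1 - C) := by rw [← hg1]; linarith
  nlinarith
end

section
/- Consider n receivers, two states H and L with prior Pr[H] = 1/(n+1), Pr[L] = n/(n+1), receiver utilities u_i(H) = 1, u_i(L) = -1 for all i, and sender utility f(S) = min(|S|, 1). The private signaling scheme that recommends action 1 to all receivers in state H and to a single uniformly random receiver in state L is persuasive for every receiver and achieves expected sender utility 1. -/
open Finset

lemma aux_sum_card_one (n : ℕ) (hn : 0 < n) (c : ℝ) :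
    ∑ S : Finset (Fin n), (if S.card = 1 then c else 0) = (n : ℝ) * c := by
  rw [← Finset.sum_filter, Finset.sum_const]
  have : (Finset.univ.filter (fun S : Finset (Fin n) => S.card = 1))
      = Finset.powersetCard 1 Finset.univ := by
    rw [Finset.powersetCard_eq_filter, Finset.powerset_univ]
  rw [this, Finset.card_powersetCard]
  simp

lemma aux_marginal (n : ℕ) (i : Fin n) (c : ℝ) :
    ∑ S : Finset (Fin n), (if i ∈ S then (if S.card = 1 then c else 0) else 0) = c := by
  have h : ∀ S : Finset (Fin n),
      (if i ∈ S then (if S.card = 1 then c else 0) else 0) = if S = {i} then c else 0 := by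
    intro S
    by_cases hS : S = {i}
    · simp [hS]
    · rcases Decidable.em (i ∈ S) with hi | hi
      · rcases Decidable.em (S.card = 1) with hc | hc
        · exfalso; obtain ⟨a, ha⟩ := Finset.card_eq_one.mp hc
          subst ha; simp at hi; subst hi; exact hS rfl
        · simp [hi, hc, hS]
      · simp [hi, hS]
  rw [Finset.sum_congr rfl (fun S _ => h S),
    Finset.sum_ite_eq' Finset.univ ({i} : Finset (Fin n))]
  simp

/-- With states H (prob 1/(n+1)) and L (prob n/(n+1)), u_i(H)=1, u_i(L)=-1, and sender
utility f(S) = min(|S|,1), the private scheme recommending action 1 to everyone in state H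
and to a single uniformly random receiver in state L is a valid scheme, is persuasive for
every receiver, and attains expected sender utility 1. -/
theorem private_scheme_optimal (n : ℕ) (hn : 0 < n)
    (φH φL : Finset (Fin n) → ℝ)
    (hφH : φH = fun S => if S = Finset.univ then (1 : ℝ) else 0)
    (hφL : φL = fun S => if S.card = 1 then 1 / (n : ℝ) else 0) :
    (∑ S : Finset (Fin n), φH S = 1) ∧
    (∑ S : Finset (Fin n), φL S = 1) ∧
    (∀ i : Fin n,
      (1 / ((n : ℝ) + 1)) * (∑ S : Finset (Fin n), if i ∈ S then φH S else 0) * 1 +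
        ((n : ℝ) / ((n : ℝ) + 1)) *
          (∑ S : Finset (Fin n), if i ∈ S then φL S else 0) * (-1) ≥ 0) ∧
    (1 / ((n : ℝ) + 1)) * (∑ S : Finset (Fin n), φH S * min (S.card : ℝ) 1) +
        ((n : ℝ) / ((n : ℝ) + 1)) *
          (∑ S : Finset (Fin n), φL S * min (S.card : ℝ) 1) = 1 := by
  subst hφH hφL
  have hn' : (0 : ℝ) < n := by exact_mod_cast hn
  have hn1 : (1 : ℝ) ≤ (n : ℝ) := by exact_mod_cast hn
  refine ⟨?_, ?_, ?_, ?_⟩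
  · rw [Finset.sum_ite_eq' Finset.univ (Finset.univ : Finset (Fin n))]; simp
  · rw [aux_sum_card_one n hn]; field_simp
  · intro i
    have h1 : (∑ S : Finset (Fin n),
        if i ∈ S then (if S = Finset.univ then (1 : ℝ) else 0) else 0) = 1 := by
      have h : ∀ S : Finset (Fin n),
          (if i ∈ S then (if S = Finset.univ then (1 : ℝ) else 0) else 0)
            = if S = Finset.univ then (1 : ℝ) else 0 := by
        intro S
        by_cases hS : S = Finset.univ
        · simp [hS]
        · simp [hS]
      rw [Finset.sum_congr rfl (fun S _ => h S),
        Finset.sum_ite_eq' Finset.univ (Finset.univ : Finset (Fin n))]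
      simp
    rw [h1, aux_marginal n i (1 / (n : ℝ))]
    have hne : (n : ℝ) ≠ 0 := ne_of_gt hn'
    field_simp
    norm_num
  · have h2 : (∑ S : Finset (Fin n),
        (if S = Finset.univ then (1 : ℝ) else 0) * min (S.card : ℝ) 1) = 1 := by
      have h : ∀ S : Finset (Fin n),
          (if S = Finset.univ then (1 : ℝ) else 0) * min (S.card : ℝ) 1
            = if S = Finset.univ then (1 : ℝ) else 0 := by
        intro S
        by_cases hS : S = Finset.univ
        · have hc : (1 : ℝ) ≤ (S.card : ℝ) := by
            rw [hS, Finset.card_univ, Fintype.card_fin]; exact hn1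
          rw [min_eq_right hc, if_pos hS, one_mul]
        · simp [hS]
      rw [Finset.sum_congr rfl (fun S _ => h S),
        Finset.sum_ite_eq' Finset.univ (Finset.univ : Finset (Fin n))]
      simp
    have h3 : (∑ S : Finset (Fin n),
        (if S.card = 1 then 1 / (n : ℝ) else 0) * min (S.card : ℝ) 1) = 1 := by
      have h : ∀ S : Finset (Fin n),
          (if S.card = 1 then 1 / (n : ℝ) else 0) * min (S.card : ℝ) 1
            = if S.card = 1 then 1 / (n : ℝ) else 0 := by
        intro S
        by_cases hS : S.card = 1
        · simp [hS]
        · simp [hS]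
      rw [Finset.sum_congr rfl (fun S _ => h S), aux_sum_card_one n hn]
      field_simp
    rw [h2, h3]
    field_simp
    ring
end

section
/- Consider n identical receivers with two states H and L, prior Pr[H] = 1/(n+1), Pr[L] = n/(n+1), utilities u_i(H) = 1, u_i(L) = -1 for all i, and sender utility f(S) = min(|S|,1). In any persuasive public signaling scheme (where all receivers receive the same signal and hence, being identical, take the same action), the sender's expected utility is at most 2/(n+1). Hence the ratio between the optimal private and optimal public sender utilities is at least (n+1)/2. -/
open Finset

/-- With n identical receivers, states H (prob 1/(n+1)) and L (prob n/(n+1)),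
u_i(H)=1, u_i(L)=-1, and sender utility f(S) = min(|S|,1): any persuasive direct public
signaling scheme `π` yields expected sender utility at most 2/(n+1); hence, since the
optimal private scheme attains utility 1, the private/public ratio is at least (n+1)/2. -/
theorem public_scheme_bound (n : ℕ) (hn : 0 < n)
    (π : Bool → Finset (Fin n) → ℝ)
    (hπ0 : ∀ θ S, 0 ≤ π θ S)
    (hπ1 : ∀ θ, ∑ S : Finset (Fin n), π θ S = 1)
    (hpers : ∀ S : Finset (Fin n), ∀ i ∈ S,
      (1 / ((n : ℝ) + 1)) * π true S * 1 +
        ((n : ℝ) / ((n : ℝ) + 1)) * π false S * (-1) ≥ 0) :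
    (1 / ((n : ℝ) + 1)) * (∑ S : Finset (Fin n), π true S * min (S.card : ℝ) 1) +
        ((n : ℝ) / ((n : ℝ) + 1)) *
          (∑ S : Finset (Fin n), π false S * min (S.card : ℝ) 1) ≤ 2 / ((n : ℝ) + 1) ∧
    (((n : ℝ) + 1) / 2) *
      ((1 / ((n : ℝ) + 1)) * (∑ S : Finset (Fin n), π true S * min (S.card : ℝ) 1) +
        ((n : ℝ) / ((n : ℝ) + 1)) *
          (∑ S : Finset (Fin n), π false S * min (S.card : ℝ) 1)) ≤ 1 := by
  have hn1 : (0:ℝ) < (n:ℝ) + 1 := by positivity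
  have hnpos : (0:ℝ) < (n:ℝ) := by exact_mod_cast hn
  set A := ∑ S : Finset (Fin n), π true S * min (S.card : ℝ) 1 with hA
  set B := ∑ S : Finset (Fin n), π false S * min (S.card : ℝ) 1 with hB
  have hmin01 : ∀ S : Finset (Fin n), 0 ≤ min (S.card : ℝ) 1 ∧ min (S.card : ℝ) 1 ≤ 1 := by
    intro S
    constructor
    · exact le_min (by positivity) zero_le_one
    · exact min_le_right _ _
  have hAle : A ≤ 1 := by
    calc A ≤ ∑ S : Finset (Fin n), π true S := by
            apply Finset.sum_le_sum
            intro S _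
            have := hmin01 S
            nlinarith [hπ0 true S]
      _ = 1 := hπ1 true
  have hBle : (n:ℝ) * B ≤ 1 := by
    have key : ∀ S : Finset (Fin n), (n:ℝ) * (π false S * min (S.card : ℝ) 1)
        ≤ π true S * min (S.card : ℝ) 1 := by
      intro S
      rcases S.eq_empty_or_nonempty with rfl | ⟨i, hi⟩
      · simp
      · have h := hpers S i hi
        have hmin : min (S.card : ℝ) 1 = 1 := by
          have : (1:ℝ) ≤ (S.card : ℝ) := by
            have : 1 ≤ S.card := Finset.card_pos.mpr ⟨i, hi⟩
            exact_mod_cast this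
          simp [min_eq_right this]
        rw [hmin]
        have hne : ((n:ℝ)+1) ≠ 0 := hn1.ne'
        rw [ge_iff_le] at h
        have h2 : (n:ℝ) * π false S ≤ π true S := by
          have h3 : 0 ≤ ((n:ℝ)+1) * (1 / ((n : ℝ) + 1) * π true S * 1 +
              (n:ℝ) / ((n : ℝ) + 1) * π false S * (-1)) := mul_nonneg hn1.le h
          rw [mul_add] at h3
          have e1 : ((n:ℝ)+1) * (1 / ((n : ℝ) + 1) * π true S * 1) = π true S := by
            field_simp
          have e2 : ((n:ℝ)+1) * ((n:ℝ) / ((n : ℝ) + 1) * π false S * (-1)) =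
              -((n:ℝ) * π false S) := by field_simp
          rw [e1, e2] at h3
          linarith
        linarith
    calc (n:ℝ) * B = ∑ S : Finset (Fin n), (n:ℝ) * (π false S * min (S.card : ℝ) 1) := by
          rw [hB, Finset.mul_sum]
      _ ≤ A := Finset.sum_le_sum fun S _ => key S
      _ ≤ 1 := hAle
  have hmain : (1 / ((n : ℝ) + 1)) * A + ((n : ℝ) / ((n : ℝ) + 1)) * B ≤ 2 / ((n : ℝ) + 1) := by
    have h1 : (1/((n:ℝ)+1)) * A ≤ 1/((n:ℝ)+1) := by
      rw [mul_comm]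
      exact mul_le_of_le_one_left (by positivity) hAle
    have h2 : ((n:ℝ)/((n:ℝ)+1)) * B ≤ 1/((n:ℝ)+1) := by
      have e : ((n:ℝ)/((n:ℝ)+1)) * B = ((n:ℝ)*B) * (1/((n:ℝ)+1)) := by ring
      rw [e]
      exact mul_le_of_le_one_left (by positivity) hBle
    have e2 : (2:ℝ)/((n:ℝ)+1) = 1/((n:ℝ)+1) + 1/((n:ℝ)+1) := by ring
    linarith
  refine ⟨hmain, ?_⟩
  have : (((n:ℝ)+1)/2) * (2/((n:ℝ)+1)) = 1 := by field_simp
  calc (((n:ℝ)+1)/2) * ((1 / ((n : ℝ) + 1)) * A + ((n : ℝ) / ((n : ℝ) + 1)) * B)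
      ≤ (((n:ℝ)+1)/2) * (2/((n:ℝ)+1)) := by
        apply mul_le_mul_of_nonneg_left hmain (by positivity)
    _ = 1 := this
end

section
/- Let G = ([n], E) be an undirected graph. Let Θ = [n] and define receiver utilities u_i(θ) = 1/2 if i = θ, u_i(θ) = -1 if (i,θ) ∈ E, and u_i(θ) = -1/(4n) otherwise. Then for any probability distribution x on Θ, the set S = { i ∈ [n] : ∑_{θ∈Θ} x_θ u_i(θ) ≥ 0 } is an independent set of G. -/
open Finset

/-- For the mixture-selection utilities built from a graph `G`
(`u_i(θ) = 1/2` if `i = θ`, `-1` if `(i,θ) ∈ E`, and `-1/(4n)` otherwise),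
the set of receivers whose posterior expected utility under any distribution `x` over
states is nonnegative forms an independent set of `G`. -/
theorem nonneg_posterior_independent (n : ℕ) (G : SimpleGraph (Fin n)) [DecidableRel G.Adj]
    (u : Fin n → Fin n → ℝ)
    (hu : ∀ i θ, u i θ =
      if i = θ then 1 / 2 else if G.Adj i θ then -1 else -(1 / (4 * (n : ℝ))))
    (x : Fin n → ℝ) (hx0 : ∀ θ, 0 ≤ x θ) (hx1 : ∑ θ : Fin n, x θ = 1) :
    ∀ i j : Fin n,
      0 ≤ ∑ θ : Fin n, x θ * u i θ →
      0 ≤ ∑ θ : Fin n, x θ * u j θ →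
      ¬ G.Adj i j := by
  intro i j hi hj hadj
  have hn : (0:ℝ) < n := by exact_mod_cast i.pos
  have hn1 : (1:ℝ) ≤ n := by exact_mod_cast i.pos
  have step : ∀ a b : Fin n, G.Adj a b → 0 ≤ ∑ θ : Fin n, x θ * u a θ →
      x b ≤ x a / 2 := by
    intro a b hab ha
    have hne : a ≠ b := G.ne_of_adj hab
    have key : ∑ θ : Fin n, x θ * u a θ ≤
        ∑ θ : Fin n, ((if θ = a then x a / 2 else 0) + (if θ = b then -x b else 0)) := by
      apply Finset.sum_le_sum
      intro θ _
      by_cases h1 : θ = a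
      · subst h1
        rw [hu]
        simp [hne]
        linarith
      · by_cases h2 : θ = b
        · subst h2
          rw [hu, if_neg hne, if_pos hab]
          simp [h1]
        · have hu0 : u a θ ≤ 0 := by
            rw [hu]
            have h1' : a ≠ θ := fun h => h1 h.symm
            split_ifs with hh1 hh2
            · exact absurd hh1 h1'
            · norm_num
            · have : (0:ℝ) ≤ 1 / (4 * (n:ℝ)) := by positivity
              linarith
          simp only [if_neg h1, if_neg h2, add_zero]
          exact mul_nonpos_of_nonneg_of_nonpos (hx0 θ) hu0
    rw [Finset.sum_add_distrib, Finset.sum_ite_eq' univ a, Finset.sum_ite_eq' univ b] at key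
    simp at key
    linarith
  have h1 := step i j hadj hi
  have h2 := step j i hadj.symm hj
  have hxi : x i = 0 := by linarith [hx0 i, hx0 j]
  have hfin : ∑ θ : Fin n, x θ * u i θ ≤ ∑ θ : Fin n, x θ * (-(1 / (4 * (n:ℝ)))) := by
    apply Finset.sum_le_sum
    intro θ _
    by_cases h : θ = i
    · subst h
      rw [hxi]
      simp
    · have hu' : u i θ ≤ -(1 / (4 * (n:ℝ))) := by
        rw [hu]
        split_ifs with hh1 hh2
        · exact absurd hh1.symm h
        · rw [neg_le_neg_iff, div_le_one (by linarith)]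
          linarith
        · exact le_refl _
      exact mul_le_mul_of_nonneg_left hu' (hx0 θ)
  rw [← Finset.sum_mul, hx1, one_mul] at hfin
  have : (0:ℝ) < 1 / (4 * (n:ℝ)) := by positivity
  linarith
end

section
/- Let φ be a private signaling scheme over states Θ with prior λ and monotone sender utilities f_θ, and let x_{θ,i} be the marginals of φ. Then the sender's expected utility from φ equals ∑_θ λ(θ) E_{S~φ(θ)}[f_θ(S)], and if each f_θ is nonnegative monotone submodular, the independent scheme φ^I with the same marginals (recommending action 1 to each i independently with probability x_{θ,i} in state θ) satisfies Val(φ^I) ≥ (1 - 1/e) Val(φ) and satisfies the same persuasiveness constraints. -/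
open Finset

namespace CGap
variable {α : Type*} [DecidableEq α]

/-- Product (independent) distribution weight on subsets of `s`. -/
def P (y : α → ℝ) (s S : Finset α) : ℝ := (∏ i ∈ S, y i) * ∏ i ∈ s \ S, (1 - y i)

lemma P_nonneg {y : α → ℝ} (hy0 : ∀ i, 0 ≤ y i) (hy1 : ∀ i, y i ≤ 1) (s S : Finset α) :
    0 ≤ P y s S :=
  mul_nonneg (Finset.prod_nonneg fun i _ => hy0 i)
    (Finset.prod_nonneg fun i _ => by linarith [hy1 i])

lemma P_insert_notMem (y : α → ℝ) {a : α} {s S : Finset α} (ha : a ∉ s) (hS : S ⊆ s) :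
    P y (insert a s) S = (1 - y a) * P y s S := by
  have haS : a ∉ S := fun h => ha (hS h)
  have h1 : insert a s \ S = insert a (s \ S) := by
    rw [Finset.insert_sdiff_of_notMem _ haS]
  have h2 : a ∉ s \ S := fun h => ha (Finset.mem_sdiff.1 h).1
  rw [P, P, h1, Finset.prod_insert h2]; ring

lemma P_insert_mem (y : α → ℝ) {a : α} {s S : Finset α} (ha : a ∉ s) (hS : S ⊆ s) :
    P y (insert a s) (insert a S) = y a * P y s S := by
  have haS : a ∉ S := fun h => ha (hS h)
  have h1 : insert a s \ insert a S = s \ S := by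
    ext i
    simp only [Finset.mem_sdiff, Finset.mem_insert]
    constructor
    · rintro ⟨h | h, h2⟩
      · exact absurd (Or.inl h) h2
      · exact ⟨h, fun hi => h2 (Or.inr hi)⟩
    · rintro ⟨h1, h2⟩
      exact ⟨Or.inr h1, by rintro (rfl | h); exacts [ha h1, h2 h]⟩
  rw [P, P, h1, Finset.prod_insert haS]; ring

lemma sum_P (y : α → ℝ) (s : Finset α) : ∑ S ∈ s.powerset, P y s S = 1 := by
  induction s using Finset.induction_on with
  | empty => simp [P]
  | insert a s ha ih =>
    rw [Finset.sum_powerset_insert ha]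
    have h1 : ∀ S ∈ s.powerset, P y (insert a s) S = (1 - y a) * P y s S := fun S hS =>
      P_insert_notMem y ha (Finset.mem_powerset.1 hS)
    have h2 : ∀ S ∈ s.powerset, P y (insert a s) (insert a S) = y a * P y s S := fun S hS =>
      P_insert_mem y ha (Finset.mem_powerset.1 hS)
    rw [Finset.sum_congr rfl h1, Finset.sum_congr rfl h2, ← Finset.mul_sum, ← Finset.mul_sum, ih]
    ring

lemma marg_P (y : α → ℝ) {s : Finset α} {i : α} (hi : i ∈ s) :
    ∑ S ∈ s.powerset, (if i ∈ S then P y s S else 0) = y i := by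
  induction s using Finset.induction_on with
  | empty => simp at hi
  | insert a s ha ih =>
    rw [Finset.sum_powerset_insert ha]
    rcases Finset.mem_insert.1 hi with rfl | his
    · have h1 : ∀ S ∈ s.powerset, (if i ∈ S then P y (insert i s) S else 0) = 0 := by
        intro S hS
        have : i ∉ S := fun h => ha (Finset.mem_powerset.1 hS h)
        simp [this]
      have h2 : ∀ S ∈ s.powerset,
          (if i ∈ insert i S then P y (insert i s) (insert i S) else 0) = y i * P y s S := by
        intro S hS
        simp [P_insert_mem y ha (Finset.mem_powerset.1 hS)]
      rw [Finset.sum_congr rfl h1, Finset.sum_congr rfl h2, ← Finset.mul_sum, sum_P]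
      simp
    · have hia : i ≠ a := fun h => ha (h ▸ his)
      have h1 : ∀ S ∈ s.powerset, (if i ∈ S then P y (insert a s) S else 0) =
          (1 - y a) * (if i ∈ S then P y s S else 0) := by
        intro S hS
        by_cases h : i ∈ S <;> simp [h, P_insert_notMem y ha (Finset.mem_powerset.1 hS)]
      have h2 : ∀ S ∈ s.powerset, (if i ∈ insert a S then P y (insert a s) (insert a S) else 0) =
          y a * (if i ∈ S then P y s S else 0) := by
        intro S hS
        have : (i ∈ insert a S) = (i ∈ S) := by simp [Finset.mem_insert, hia]
        by_cases h : i ∈ S <;>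
          simp [this, h, P_insert_mem y ha (Finset.mem_powerset.1 hS)]
      rw [Finset.sum_congr rfl h1, Finset.sum_congr rfl h2, ← Finset.mul_sum, ← Finset.mul_sum,
        ih his]
      ring


lemma conv_P (y w : α → ℝ) (s : Finset α) (f : Finset α → ℝ) :
    ∑ R ∈ s.powerset, P y s R * ∑ D ∈ s.powerset, P w s D * f (R ∪ D)
      = ∑ T ∈ s.powerset, P (fun i => y i + w i - y i * w i) s T * f T := by
  induction s using Finset.induction_on generalizing f with
  | empty => simp [P]
  | insert a s ha ih =>
    -- inner sum splitting, valid for arbitrary R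
    have hG : ∀ (g : Finset α → ℝ) (R : Finset α),
        ∑ D ∈ (insert a s).powerset, P w (insert a s) D * g (R ∪ D)
          = (1 - w a) * ∑ D ∈ s.powerset, P w s D * g (R ∪ D)
            + w a * ∑ D ∈ s.powerset, P w s D * g (insert a (R ∪ D)) := by
      intro g R
      rw [Finset.sum_powerset_insert ha, Finset.mul_sum, Finset.mul_sum]
      congr 1
      · exact Finset.sum_congr rfl fun D hD => by
          rw [P_insert_notMem w ha (Finset.mem_powerset.1 hD)]; ring
      · exact Finset.sum_congr rfl fun D hD => by
          rw [P_insert_mem w ha (Finset.mem_powerset.1 hD), Finset.union_insert]; ring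
    rw [Finset.sum_powerset_insert ha, Finset.sum_powerset_insert ha]
    have e1 : ∀ R ∈ s.powerset,
        P y (insert a s) R * ∑ D ∈ (insert a s).powerset, P w (insert a s) D * f (R ∪ D)
          = ((1 - y a) * (1 - w a)) * (P y s R * ∑ D ∈ s.powerset, P w s D * f (R ∪ D))
            + ((1 - y a) * w a) *
              (P y s R * ∑ D ∈ s.powerset, P w s D * f (insert a (R ∪ D))) := by
      intro R hR
      rw [hG f R, P_insert_notMem y ha (Finset.mem_powerset.1 hR)]; ring
    have e2 : ∀ R ∈ s.powerset,
        P y (insert a s) (insert a R) *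
            ∑ D ∈ (insert a s).powerset, P w (insert a s) D * f (insert a R ∪ D)
          = (y a) * (P y s R * ∑ D ∈ s.powerset, P w s D * f (insert a (R ∪ D))) := by
      intro R hR
      have h1 : ∀ D : Finset α, insert a R ∪ D = insert a (R ∪ D) := fun D =>
        Finset.insert_union a R D
      have h2 : ∀ D : Finset α, insert a (insert a (R ∪ D)) = insert a (R ∪ D) := fun D =>
        Finset.insert_idem a (R ∪ D)
      rw [hG f (insert a R), P_insert_mem y ha (Finset.mem_powerset.1 hR)]
      simp only [h1, h2]
      ring
    rw [Finset.sum_congr rfl e1, Finset.sum_congr rfl e2, Finset.sum_add_distrib,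
      ← Finset.mul_sum, ← Finset.mul_sum, ← Finset.mul_sum,
      ih f, ih (fun T => f (insert a T))]
    have e3 : ∀ T ∈ s.powerset,
        P (fun i => y i + w i - y i * w i) (insert a s) T * f T =
        (1 - (y a + w a - y a * w a)) * (P (fun i => y i + w i - y i * w i) s T * f T) := by
      intro T hT
      rw [P_insert_notMem _ ha (Finset.mem_powerset.1 hT)]; ring
    have e4 : ∀ T ∈ s.powerset,
        P (fun i => y i + w i - y i * w i) (insert a s) (insert a T) * f (insert a T) =
        (y a + w a - y a * w a) *
          (P (fun i => y i + w i - y i * w i) s T * f (insert a T)) := by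
      intro T hT
      rw [P_insert_mem _ ha (Finset.mem_powerset.1 hT)]; ring
    rw [Finset.sum_congr rfl e3, Finset.sum_congr rfl e4, ← Finset.mul_sum, ← Finset.mul_sum]
    ring
lemma marginal_le (f : Finset α → ℝ)
    (hmono : ∀ A B : Finset α, A ⊆ B → f A ≤ f B)
    (hsub : ∀ A B : Finset α, f (A ∪ B) + f (A ∩ B) ≤ f A + f B)
    {R X : Finset α} (hRX : R ⊆ X) (a : α) :
    f (insert a X) - f X ≤ f (insert a R) - f R := by
  by_cases haX : a ∈ X
  · rw [Finset.insert_eq_self.2 haX]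
    have := hmono R (insert a R) (Finset.subset_insert a R)
    linarith
  · have h := hsub X (insert a R)
    have h1 : X ∪ insert a R = insert a X := by
      ext i; simp only [Finset.mem_union, Finset.mem_insert]
      constructor
      · rintro (h' | h' | h')
        exacts [Or.inr h', Or.inl h', Or.inr (hRX h')]
      · rintro (h' | h')
        exacts [Or.inr (Or.inl h'), Or.inl h']
    have h2 : X ∩ insert a R = R := by
      ext i; simp only [Finset.mem_inter, Finset.mem_insert]
      constructor
      · rintro ⟨hi, rfl | hi'⟩
        · exact absurd hi haX
        · exact hi'
      · intro hi; exact ⟨hRX hi, Or.inr hi⟩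
    rw [h1, h2] at h
    linarith

lemma submod_telescope (f : Finset α → ℝ)
    (hmono : ∀ A B : Finset α, A ⊆ B → f A ≤ f B)
    (hsub : ∀ A B : Finset α, f (A ∪ B) + f (A ∩ B) ≤ f A + f B)
    (R S : Finset α) :
    f (R ∪ S) - f R ≤ ∑ i ∈ S, (f (insert i R) - f R) := by
  induction S using Finset.induction_on with
  | empty => simp
  | insert a S ha ih =>
    rw [Finset.sum_insert ha]
    have h1 : R ∪ insert a S = insert a (R ∪ S) := Finset.union_insert a R S
    have h2 := marginal_le f hmono hsub (Finset.subset_union_left (s₁ := R) (s₂ := S)) a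
    rw [h1]
    linarith

lemma grad_ge (s : Finset α) (f : Finset α → ℝ)
    (hmono : ∀ A B : Finset α, A ⊆ B → f A ≤ f B)
    (hsub : ∀ A B : Finset α, f (A ∪ B) + f (A ∩ B) ≤ f A + f B)
    (φ : Finset α → ℝ) (hφ0 : ∀ S, 0 ≤ φ S) (hφ1 : ∑ S ∈ s.powerset, φ S = 1)
    (x : α → ℝ) (hx : ∀ i, x i = ∑ S ∈ s.powerset, if i ∈ S then φ S else 0)
    (R : Finset α) :
    (∑ S ∈ s.powerset, φ S * f S) - f R ≤ ∑ i ∈ s, x i * (f (insert i R) - f R) := by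
  have swap : ∑ i ∈ s, x i * (f (insert i R) - f R)
      = ∑ S ∈ s.powerset, φ S * ∑ i ∈ S, (f (insert i R) - f R) := by
    have e1 : ∀ i ∈ s, x i * (f (insert i R) - f R)
        = ∑ S ∈ s.powerset, (if i ∈ S then φ S * (f (insert i R) - f R) else 0) := by
      intro i _
      rw [hx i, Finset.sum_mul]
      exact Finset.sum_congr rfl fun S _ => by by_cases h : i ∈ S <;> simp [h]
    rw [Finset.sum_congr rfl e1, Finset.sum_comm]
    refine Finset.sum_congr rfl fun S hS => ?_
    rw [Finset.mul_sum, Finset.sum_ite_mem, Finset.inter_eq_right.2 (Finset.mem_powerset.1 hS)]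
  rw [swap]
  have key : ∀ S ∈ s.powerset, φ S * (f S - f R) ≤ φ S * ∑ i ∈ S, (f (insert i R) - f R) := by
    intro S _
    refine mul_le_mul_of_nonneg_left ?_ (hφ0 S)
    have h1 := submod_telescope f hmono hsub R S
    have h2 : f S ≤ f (R ∪ S) := hmono _ _ Finset.subset_union_right
    linarith
  calc (∑ S ∈ s.powerset, φ S * f S) - f R
      = ∑ S ∈ s.powerset, φ S * (f S - f R) := by
        simp only [mul_sub]
        rw [Finset.sum_sub_distrib, ← Finset.sum_mul, hφ1, one_mul]
    _ ≤ _ := Finset.sum_le_sum key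
lemma step_ge (w : α → ℝ) (hw0 : ∀ i, 0 ≤ w i) (hw1 : ∀ i, w i ≤ 1) (s : Finset α)
    (f : Finset α → ℝ) (hmono : ∀ A B : Finset α, A ⊆ B → f A ≤ f B) (R : Finset α) :
    f R + ∑ i ∈ s, P w s {i} * (f (insert i R) - f R)
      ≤ ∑ D ∈ s.powerset, P w s D * f (R ∪ D) := by
  have h0 : ∑ D ∈ s.powerset, P w s D * f (R ∪ D)
      = f R + ∑ D ∈ s.powerset, P w s D * (f (R ∪ D) - f R) := by
    simp only [mul_sub]
    rw [Finset.sum_sub_distrib, ← Finset.sum_mul, sum_P, one_mul]; ring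
  rw [h0]
  have himg : Finset.image (fun i => ({i} : Finset α)) s ⊆ s.powerset := by
    intro D hD; obtain ⟨i, hi, rfl⟩ := Finset.mem_image.1 hD
    exact Finset.mem_powerset.2 (Finset.singleton_subset_iff.2 hi)
  have hsum : ∑ i ∈ s, P w s {i} * (f (insert i R) - f R)
      = ∑ D ∈ Finset.image (fun i => ({i} : Finset α)) s, P w s D * (f (R ∪ D) - f R) := by
    rw [Finset.sum_image (fun i _ j _ h => Finset.singleton_injective h)]
    refine Finset.sum_congr rfl fun i _ => ?_
    rw [Finset.union_comm, Finset.insert_eq]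
  rw [hsum]
  refine (add_le_add_iff_left _).2 (Finset.sum_le_sum_of_subset_of_nonneg himg fun D hD _ =>
    mul_nonneg (P_nonneg hw0 hw1 s D)
      (by linarith [hmono R (R ∪ D) Finset.subset_union_left]))

lemma F_mono (y z : α → ℝ) (hy0 : ∀ i, 0 ≤ y i) (hz1 : ∀ i, z i ≤ 1) (hyz : ∀ i, y i ≤ z i)
    (s : Finset α) (f : Finset α → ℝ) (hmono : ∀ A B : Finset α, A ⊆ B → f A ≤ f B) :
    ∑ S ∈ s.powerset, P y s S * f S ≤ ∑ S ∈ s.powerset, P z s S * f S := by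
  set w : α → ℝ := fun i => if y i = 1 then 0 else (z i - y i) / (1 - y i) with hwdef
  have hylt : ∀ i, y i ≤ 1 := fun i => le_trans (hyz i) (hz1 i)
  have hw0 : ∀ i, 0 ≤ w i := by
    intro i; by_cases h : y i = 1 <;> simp only [hwdef, h, if_true, if_false, le_refl]
    exact div_nonneg (by linarith [hyz i]) (by linarith [hylt i])
  have hw1 : ∀ i, w i ≤ 1 := by
    intro i; by_cases h : y i = 1 <;> simp only [hwdef, h, if_true, if_false]
    · linarith
    · have hlt : y i < 1 := lt_of_le_of_ne (hylt i) h
      rw [div_le_one (by linarith)]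
      linarith [hz1 i]
  have hz : (fun i => y i + w i - y i * w i) = z := by
    funext i
    by_cases h : y i = 1
    · have : z i = 1 := le_antisymm (hz1 i) (h ▸ hyz i)
      simp [hwdef, h, this]
    · have h1 : (1 : ℝ) - y i ≠ 0 := by
        intro hc; exact h (by linarith [sub_eq_zero.1 hc])
      simp only [hwdef, h, if_false]
      field_simp
      ring
  rw [← hz, ← conv_P y w s f]
  have e : ∀ R ∈ s.powerset, P y s R * f R
      = P y s R * ∑ D ∈ s.powerset, P w s D * f R := by
    intro R _
    rw [← Finset.sum_mul, sum_P, one_mul]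
  rw [Finset.sum_congr rfl e]
  refine Finset.sum_le_sum fun R hR => ?_
  refine mul_le_mul_of_nonneg_left (Finset.sum_le_sum fun D hD => ?_) (P_nonneg hy0 hylt s R)
  exact mul_le_mul_of_nonneg_left (hmono _ _ Finset.subset_union_left) (P_nonneg hw0 hw1 s D)
lemma correlation_gap (s : Finset α) (f : Finset α → ℝ)
    (hfnn : ∀ S, 0 ≤ f S)
    (hmono : ∀ A B : Finset α, A ⊆ B → f A ≤ f B)
    (hsub : ∀ A B : Finset α, f (A ∪ B) + f (A ∩ B) ≤ f A + f B)
    (φ : Finset α → ℝ) (hφ0 : ∀ S, 0 ≤ φ S) (hφ1 : ∑ S ∈ s.powerset, φ S = 1)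
    (x : α → ℝ) (hx : ∀ i, x i = ∑ S ∈ s.powerset, if i ∈ S then φ S else 0) :
    (1 - 1 / Real.exp 1) * ∑ S ∈ s.powerset, φ S * f S
      ≤ ∑ S ∈ s.powerset, P x s S * f S := by
  set V : ℝ := ∑ S ∈ s.powerset, φ S * f S with hVdef
  have hV0 : 0 ≤ V := Finset.sum_nonneg fun S _ => mul_nonneg (hφ0 S) (hfnn S)
  have hx0 : ∀ i, 0 ≤ x i := by
    intro i; rw [hx i]
    exact Finset.sum_nonneg fun S _ => by by_cases h : i ∈ S <;> simp [h, hφ0 S]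
  have hx1 : ∀ i, x i ≤ 1 := by
    intro i; rw [hx i, ← hφ1]
    exact Finset.sum_le_sum fun S _ => by by_cases h : i ∈ S <;> simp [h, hφ0 S]
  set F : (α → ℝ) → ℝ := fun y => ∑ S ∈ s.powerset, P y s S * f S with hFdef
  have key : ∀ N : ℕ, 1 ≤ N →
      (1 - Real.exp (-((1 - 1/(N:ℝ)) ^ s.card))) * V ≤ F x := by
    intro N hN
    have hN0 : (0:ℝ) < N := by exact_mod_cast Nat.pos_of_ne_zero (by omega)
    have hN1 : (1:ℝ) ≤ N := by exact_mod_cast hN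
    set w : α → ℝ := fun i => x i / N with hwdef
    have hw0 : ∀ i, 0 ≤ w i := fun i => div_nonneg (hx0 i) (le_of_lt hN0)
    have hwN : ∀ i, w i ≤ 1 / N := fun i => (div_le_div_iff_of_pos_right hN0).mpr (hx1 i)
    have hw1 : ∀ i, w i ≤ 1 := fun i => (hwN i).trans (by rw [div_le_one hN0]; exact hN1)
    set c : ℝ := (1 - 1/(N:ℝ)) ^ s.card with hcdef
    have hbase0 : (0:ℝ) ≤ 1 - 1/(N:ℝ) := by
      have : 1/(N:ℝ) ≤ 1 := by rw [div_le_one hN0]; exact hN1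
      linarith
    have hbase1 : (1:ℝ) - 1/(N:ℝ) ≤ 1 := by
      have : (0:ℝ) ≤ 1/(N:ℝ) := by positivity
      linarith
    have hc0 : 0 ≤ c := pow_nonneg hbase0 _
    have hc1 : c ≤ 1 := pow_le_one₀ hbase0 hbase1
    have hq0 : 0 ≤ c / N := div_nonneg hc0 (le_of_lt hN0)
    have hq1 : c / N ≤ 1 := by
      rw [div_le_one hN0]; linarith
    set y : ℕ → α → ℝ := fun k i => 1 - (1 - w i) ^ k with hydef
    have h1w0 : ∀ i, (0:ℝ) ≤ 1 - w i := fun i => by linarith [hw1 i]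
    have h1w1 : ∀ i, (1:ℝ) - w i ≤ 1 := fun i => by linarith [hw0 i]
    have hy0 : ∀ k i, 0 ≤ y k i := fun k i => by
      have := pow_le_one₀ (h1w0 i) (h1w1 i) (n := k)
      simp only [hydef]; linarith
    have hy1 : ∀ k i, y k i ≤ 1 := fun k i => by
      have := pow_nonneg (h1w0 i) k
      simp only [hydef]; linarith
    -- one step of the recursion
    have step : ∀ k, V - F (y (k+1)) ≤ (1 - c/N) * (V - F (y k)) := by
      intro k
      have hcomb : (fun i => y k i + w i - y k i * w i) = y (k + 1) := by
        funext i
        simp only [hydef, pow_succ]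
        ring
      have hconv := conv_P (y k) w s f
      rw [hcomb] at hconv
      have inner : ∀ R ∈ s.powerset,
          P (y k) s R * ((1 - c/N) * f R + (c/N) * V)
            ≤ P (y k) s R * ∑ D ∈ s.powerset, P w s D * f (R ∪ D) := by
        intro R _
        refine mul_le_mul_of_nonneg_left ?_ (P_nonneg (hy0 k) (hy1 k) s R)
        have h1 := step_ge w hw0 hw1 s f hmono R
        have h2 : ∀ i ∈ s, (c/N) * (x i * (f (insert i R) - f R))
            ≤ P w s {i} * (f (insert i R) - f R) := by
          intro i hi
          have hΔ : 0 ≤ f (insert i R) - f R := by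
            linarith [hmono R (insert i R) (Finset.subset_insert i R)]
          have hP : c * w i ≤ P w s {i} := by
            have hprod : c ≤ ∏ j ∈ s \ {i}, (1 - w j) := by
              calc c ≤ (1 - 1/(N:ℝ)) ^ (s \ {i}).card :=
                    pow_le_pow_of_le_one hbase0 hbase1
                      (Finset.card_le_card (Finset.sdiff_subset))
                _ = ∏ _j ∈ s \ {i}, (1 - 1/(N:ℝ)) := by rw [Finset.prod_const]
                _ ≤ ∏ j ∈ s \ {i}, (1 - w j) :=
                    Finset.prod_le_prod (fun j _ => hbase0) (fun j _ => by
                      have := hwN j; linarith)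
            calc c * w i ≤ (∏ j ∈ s \ {i}, (1 - w j)) * w i :=
                  mul_le_mul_of_nonneg_right hprod (hw0 i)
              _ = P w s {i} := by rw [P, Finset.prod_singleton]; ring
          calc (c/N) * (x i * (f (insert i R) - f R))
              = (c * w i) * (f (insert i R) - f R) := by
                simp only [hwdef]; ring
            _ ≤ P w s {i} * (f (insert i R) - f R) :=
                mul_le_mul_of_nonneg_right hP hΔ
        have hgrad := grad_ge s f hmono hsub φ hφ0 hφ1 x hx R
        have h3 : (c/N) * (V - f R) ≤ ∑ i ∈ s, P w s {i} * (f (insert i R) - f R) := by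
          calc (c/N) * (V - f R)
              ≤ (c/N) * ∑ i ∈ s, x i * (f (insert i R) - f R) :=
                mul_le_mul_of_nonneg_left hgrad hq0
            _ = ∑ i ∈ s, (c/N) * (x i * (f (insert i R) - f R)) := Finset.mul_sum _ _ _
            _ ≤ _ := Finset.sum_le_sum h2
        linarith
      have hexpand : ∑ R ∈ s.powerset, P (y k) s R * ((1 - c/N) * f R + (c/N) * V)
          = (1 - c/N) * F (y k) + (c/N) * V := by
        simp only [mul_add]
        rw [Finset.sum_add_distrib]
        congr 1
        · rw [hFdef, Finset.mul_sum]
          exact Finset.sum_congr rfl fun R _ => by ring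
        · rw [← Finset.sum_mul, sum_P, one_mul]
      have hstep : (1 - c/N) * F (y k) + (c/N) * V ≤ F (y (k+1)) := by
        calc (1 - c/N) * F (y k) + (c/N) * V
            = ∑ R ∈ s.powerset, P (y k) s R * ((1 - c/N) * f R + (c/N) * V) := hexpand.symm
          _ ≤ ∑ R ∈ s.powerset, P (y k) s R * ∑ D ∈ s.powerset, P w s D * f (R ∪ D) :=
              Finset.sum_le_sum inner
          _ = F (y (k+1)) := hconv
      have hring : V - ((1 - c/N) * F (y k) + (c/N) * V) = (1 - c/N) * (V - F (y k)) := by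
        ring
      linarith
    have iter : ∀ k, V - F (y k) ≤ (1 - c/N) ^ k * (V - F (y 0)) := by
      intro k
      induction k with
      | zero => simp
      | succ k ih =>
        calc V - F (y (k+1)) ≤ (1 - c/N) * (V - F (y k)) := step k
          _ ≤ (1 - c/N) * ((1 - c/N) ^ k * (V - F (y 0))) :=
              mul_le_mul_of_nonneg_left ih (by linarith)
          _ = (1 - c/N) ^ (k+1) * (V - F (y 0)) := by ring
    have hy0eq : y 0 = fun _ => (0:ℝ) := funext fun i => by simp [hydef]
    have hF0 : F (y 0) = f ∅ := by
      simp only [hFdef, hy0eq]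
      rw [Finset.sum_eq_single ∅]
      · simp [P]
      · intro S hS hne
        obtain ⟨i, hi⟩ := Finset.nonempty_iff_ne_empty.2 hne
        rw [P]
        rw [Finset.prod_eq_zero hi rfl]
        ring
      · intro h; exact absurd (Finset.empty_mem_powerset s) h
    have hVN : V - F (y N) ≤ (1 - c/N) ^ N * V := by
      calc V - F (y N) ≤ (1 - c/N) ^ N * (V - F (y 0)) := iter N
        _ ≤ (1 - c/N) ^ N * V := by
            refine mul_le_mul_of_nonneg_left ?_ (pow_nonneg (by linarith) N)
            rw [hF0]; linarith [hfnn ∅]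
    have hexp : (1 - c/N) ^ N ≤ Real.exp (-c) := by
      calc (1 - c/N) ^ N ≤ (Real.exp (-(c/N))) ^ N := by
            refine pow_le_pow_left₀ (by linarith) ?_ N
            linarith [Real.add_one_le_exp (-(c/N))]
        _ = Real.exp (-c) := by
            rw [← Real.exp_nat_mul]
            congr 1
            field_simp
    have hyNx : ∀ i, y N i ≤ x i := by
      intro i
      have hb : (-1:ℝ) ≤ -(x i / N) := by
        have : x i / N ≤ 1 := (hwN i).trans (by rw [div_le_one hN0]; exact hN1)
        linarith
      have := one_add_mul_le_pow (by linarith : (-2:ℝ) ≤ -(x i / N)) N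
      have hNx : (N:ℝ) * (x i / N) = x i := by field_simp
      simp only [hydef, hwdef]
      have h1 : 1 + (N:ℝ) * (-(x i / N)) ≤ (1 + -(x i / N)) ^ N := this
      rw [mul_neg, hNx] at h1
      have h2 : (1 : ℝ) + -(x i / N) = 1 - x i / N := by ring
      rw [h2] at h1
      linarith
    have hFmono : F (y N) ≤ F x := F_mono (y N) x (hy0 N) hx1 hyNx s f hmono
    have hfinal : V - F (y N) ≤ Real.exp (-c) * V :=
      hVN.trans (mul_le_mul_of_nonneg_right hexp hV0)
    calc (1 - Real.exp (-c)) * V = V - Real.exp (-c) * V := by ring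
      _ ≤ F (y N) := by linarith
      _ ≤ F x := hFmono
  -- take the limit N → ∞
  have h1 : Filter.Tendsto (fun N : ℕ => 1 - 1/(N:ℝ)) Filter.atTop (nhds 1) := by
    have := tendsto_one_div_atTop_nhds_zero_nat (𝕜 := ℝ)
    simpa using (tendsto_const_nhds (x := (1:ℝ)) (f := Filter.atTop (α := ℕ))).sub this
  have h2 : Filter.Tendsto (fun N : ℕ => (1 - 1/(N:ℝ)) ^ s.card) Filter.atTop (nhds 1) := by
    simpa using h1.pow s.card
  have h3 : Filter.Tendsto (fun N : ℕ => Real.exp (-((1 - 1/(N:ℝ)) ^ s.card)))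
      Filter.atTop (nhds (Real.exp (-1))) :=
    (Real.continuous_exp.tendsto _).comp h2.neg
  have h4 : Filter.Tendsto (fun N : ℕ => (1 - Real.exp (-((1 - 1/(N:ℝ)) ^ s.card))) * V)
      Filter.atTop (nhds ((1 - Real.exp (-1)) * V)) :=
    (tendsto_const_nhds.sub h3).mul_const V
  have hee : Real.exp (-1) = 1 / Real.exp 1 := by
    rw [Real.exp_neg, one_div]
  rw [← hee]
  exact le_of_tendsto h4 (Filter.eventually_atTop.2 ⟨1, fun N hN => key N hN⟩)
end CGap


open Finset

/-- Replacing a private scheme `φ` with marginals `x` by the independent scheme `φ^I`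
with the same marginals preserves the persuasiveness constraints (the marginals, and
hence the constraints, are unchanged) and, for nonnegative monotone submodular sender
utilities, loses at most a factor `1 - 1/e` of the sender's expected utility. -/
theorem independent_scheme_guarantee {n : ℕ} {Θ : Type} [Fintype Θ]
    (lam : Θ → ℝ) (hlam0 : ∀ θ, 0 ≤ lam θ) (hlam1 : ∑ θ : Θ, lam θ = 1)
    (u : Fin n → Θ → ℝ)
    (f : Θ → Finset (Fin n) → ℝ)
    (hfnn : ∀ θ S, 0 ≤ f θ S)
    (hfmono : ∀ θ, ∀ S T : Finset (Fin n), S ⊆ T → f θ S ≤ f θ T)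
    (hfsub : ∀ θ, ∀ S T : Finset (Fin n), f θ (S ∪ T) + f θ (S ∩ T) ≤ f θ S + f θ T)
    (φ : Θ → Finset (Fin n) → ℝ)
    (hφ0 : ∀ θ S, 0 ≤ φ θ S)
    (hφ1 : ∀ θ, ∑ S : Finset (Fin n), φ θ S = 1)
    (x : Θ → Fin n → ℝ)
    (hx : ∀ θ i, x θ i = ∑ S : Finset (Fin n), (if i ∈ S then φ θ S else 0))
    (φI : Θ → Finset (Fin n) → ℝ)
    (hφI : ∀ θ S, φI θ S = (∏ i ∈ S, x θ i) * ∏ i ∈ Sᶜ, (1 - x θ i)) :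
    (∀ i : Fin n,
      ∑ θ : Θ, lam θ * (∑ S : Finset (Fin n), (if i ∈ S then φI θ S else 0)) * u i θ =
        ∑ θ : Θ, lam θ * x θ i * u i θ) ∧
    ∑ θ : Θ, lam θ * ∑ S : Finset (Fin n), φI θ S * f θ S ≥
      (1 - 1 / Real.exp 1) *
        ∑ θ : Θ, lam θ * ∑ S : Finset (Fin n), φ θ S * f θ S := by
  classical
  have hpow : (Finset.univ : Finset (Fin n)).powerset = Finset.univ := Finset.powerset_univ
  have hP : ∀ θ S, φI θ S = CGap.P (x θ) Finset.univ S := by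
    intro θ S
    rw [hφI θ S, CGap.P, Finset.compl_eq_univ_sdiff]
  have hmarg : ∀ θ (i : Fin n),
      ∑ S : Finset (Fin n), (if i ∈ S then φI θ S else 0) = x θ i := by
    intro θ i
    have h := CGap.marg_P (x θ) (s := (Finset.univ : Finset (Fin n))) (Finset.mem_univ i)
    rw [hpow] at h
    simp only [hP]
    exact h
  constructor
  · intro i
    exact Finset.sum_congr rfl fun θ _ => by rw [hmarg θ i]
  · rw [ge_iff_le]
    have hVineq : ∀ θ, (1 - 1 / Real.exp 1) * ∑ S : Finset (Fin n), φ θ S * f θ S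
        ≤ ∑ S : Finset (Fin n), φI θ S * f θ S := by
      intro θ
      have h := CGap.correlation_gap (Finset.univ : Finset (Fin n)) (f θ) (hfnn θ)
        (hfmono θ) (hfsub θ) (φ θ) (hφ0 θ) (by rw [hpow]; exact hφ1 θ) (x θ)
        (fun i => by rw [hpow]; exact hx θ i)
      rw [hpow] at h
      simp only [hP]
      exact h
    calc (1 - 1 / Real.exp 1) * ∑ θ : Θ, lam θ * ∑ S : Finset (Fin n), φ θ S * f θ S
        = ∑ θ : Θ, lam θ * ((1 - 1 / Real.exp 1) * ∑ S : Finset (Fin n), φ θ S * f θ S) := by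
          rw [Finset.mul_sum]
          exact Finset.sum_congr rfl fun θ _ => by ring
      _ ≤ ∑ θ : Θ, lam θ * ∑ S : Finset (Fin n), φI θ S * f θ S :=
          Finset.sum_le_sum fun θ _ => mul_le_mul_of_nonneg_left (hVineq θ) (hlam0 θ)
end

section
/- Consider m+1 = n²+1 equally likely states θ_0, ..., θ_m, receivers [n] with u_i(θ_0) = 1 and u_i(θ_j) = -1 for j ≥ 1, and sender utility f_θ ∈ {f⁰, f¹} where f⁰ ≡ 0 and f¹(S) = min(|S|,1), with f_{θ_0} = f⁰ and exactly n of the states θ_1,...,θ_m assigned f¹. Then the optimal persuasive private signaling scheme achieves expected sender utility exactly n/(m+1). -/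
open Finset

/-- With `m+1 = n²+1` equally likely states, `u_i(θ_0) = 1` and `u_i(θ_j) = -1` for
`j ≥ 1`, sender utility `f¹(S) = min(|S|,1)` on exactly `n` of the states `θ_1,…,θ_m`
(and `f⁰ ≡ 0` elsewhere, including `θ_0`), the optimal persuasive private scheme achieves
expected sender utility exactly `n/(m+1)`. -/
theorem oblivious_lower_bound_instance_value (n : ℕ) (hn : 0 < n)
    (A : Fin (n ^ 2 + 1) → Bool)
    (hA0 : A 0 = false)
    (hAcard : (Finset.univ.filter (fun j : Fin (n ^ 2 + 1) => A j = true)).card = n) :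
    IsGreatest
      {v : ℝ | ∃ φ : Fin (n ^ 2 + 1) → Finset (Fin n) → ℝ,
        (∀ θ S, 0 ≤ φ θ S) ∧
        (∀ θ, ∑ S : Finset (Fin n), φ θ S = 1) ∧
        (∀ i : Fin n, 0 ≤ ∑ θ : Fin (n ^ 2 + 1),
          (1 / ((n : ℝ) ^ 2 + 1)) *
            (∑ S : Finset (Fin n), (if i ∈ S then φ θ S else 0)) *
            (if θ = 0 then 1 else -1)) ∧
        v = ∑ θ : Fin (n ^ 2 + 1), (1 / ((n : ℝ) ^ 2 + 1)) *
          ∑ S : Finset (Fin n), φ θ S * (if A θ = true ∧ S ≠ ∅ then 1 else 0)}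
      ((n : ℝ) / ((n : ℝ) ^ 2 + 1)) := by
  have hd : (0:ℝ) < (n:ℝ)^2 + 1 := by positivity
  set c : ℝ := 1 / ((n:ℝ)^2 + 1) with hc
  have hcpos : 0 < c := by positivity
  constructor
  · -- membership: construct the optimal scheme
    set T := Finset.univ.filter (fun j : Fin (n ^ 2 + 1) => A j = true) with hT
    have e : T ≃ Fin n := T.equivFinOfCardEq hAcard
    set σ : Fin n → Fin (n^2+1) := fun i => (e.symm i : Fin (n^2+1)) with hσ
    have hσA : ∀ i, A (σ i) = true := fun i => (Finset.mem_filter.mp (e.symm i).2).2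
    have hσ0 : ∀ i, σ i ≠ 0 := by
      intro i h
      have := hσA i
      rw [h, hA0] at this
      exact Bool.false_ne_true this
    set ψ : Fin (n^2+1) → Finset (Fin n) := fun θ =>
      if θ = 0 then Finset.univ else Finset.univ.filter (fun i => σ i = θ) with hψ
    refine ⟨fun θ S => if S = ψ θ then 1 else 0, ?_, ?_, ?_, ?_⟩
    · intro θ S
      show (0:ℝ) ≤ if S = ψ θ then 1 else 0
      split <;> norm_num
    · intro θ; simp [Finset.sum_ite_eq']
    · intro i
      have key : ∀ θ : Fin (n^2+1),
          (∑ S : Finset (Fin n), (if i ∈ S then (if S = ψ θ then (1:ℝ) else 0) else 0))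
            = if i ∈ ψ θ then 1 else 0 := by
        intro θ
        have h1 : ∀ S : Finset (Fin n),
            (if i ∈ S then (if S = ψ θ then (1:ℝ) else 0) else 0)
              = if S = ψ θ then (if i ∈ ψ θ then (1:ℝ) else 0) else 0 := by
          intro S
          by_cases h : S = ψ θ
          · rw [h]; by_cases h2 : i ∈ ψ θ <;> simp [h2]
          · simp [h]
        rw [Finset.sum_congr rfl (fun S _ => h1 S), Finset.sum_ite_eq']
        simp
      have hterm : ∀ θ : Fin (n^2+1),
          c * (if i ∈ ψ θ then (1:ℝ) else 0) * (if θ = 0 then 1 else -1)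
            = (if θ = 0 then c else 0) - (if σ i = θ then c else 0) := by
        intro θ
        by_cases h0 : θ = 0
        · subst h0
          simp [hψ, (hσ0 i)]
        · have hmem : i ∈ ψ θ ↔ σ i = θ := by simp [hψ, h0]
          by_cases h1 : σ i = θ <;> simp [hψ, h0, h1]
      calc (0:ℝ) = (∑ θ : Fin (n^2+1), ((if θ = 0 then c else 0) - (if σ i = θ then c else 0))) := by
            rw [Finset.sum_sub_distrib, Finset.sum_ite_eq' Finset.univ (0 : Fin (n^2+1)) (fun _ => c),
              Finset.sum_ite_eq Finset.univ (σ i) (fun _ => c)]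
            simp
        _ = ∑ θ : Fin (n^2+1), c * (∑ S : Finset (Fin n),
              (if i ∈ S then (if S = ψ θ then (1:ℝ) else 0) else 0)) * (if θ = 0 then 1 else -1) := by
            refine Finset.sum_congr rfl fun θ _ => ?_
            rw [key θ, hterm θ]
        _ ≤ _ := le_of_eq rfl
    · have inner : ∀ θ : Fin (n^2+1),
          (∑ S : Finset (Fin n), (if S = ψ θ then (1:ℝ) else 0) * (if A θ = true ∧ S ≠ ∅ then 1 else 0))
            = if A θ = true then 1 else 0 := by
        intro θ
        have h1 : ∀ S : Finset (Fin n),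
            (if S = ψ θ then (1:ℝ) else 0) * (if A θ = true ∧ S ≠ ∅ then 1 else 0)
              = if S = ψ θ then (if A θ = true ∧ ψ θ ≠ ∅ then (1:ℝ) else 0) else 0 := by
          intro S
          by_cases h : S = ψ θ
          · subst h; simp
          · simp [h]
        rw [Finset.sum_congr rfl (fun S _ => h1 S), Finset.sum_ite_eq']
        simp only [Finset.mem_univ, if_true]
        by_cases hA : A θ = true
        · have hθ0 : θ ≠ 0 := by
            intro h; rw [h, hA0] at hA; exact Bool.false_ne_true hA
          have hne : ψ θ ≠ ∅ := by
            have hmem : e ⟨θ, Finset.mem_filter.mpr ⟨Finset.mem_univ _, hA⟩⟩ ∈ ψ θ := by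
              simp only [hψ, if_neg hθ0, Finset.mem_filter, Finset.mem_univ, true_and]
              simp [hσ]
            exact Finset.ne_empty_of_mem hmem
          simp [hA, hne]
        · simp [hA]
      rw [Finset.sum_congr rfl (fun θ _ => by rw [inner θ])]
      rw [← Finset.mul_sum, Finset.sum_boole]
      rw [show (Finset.univ.filter fun θ : Fin (n^2+1) => A θ = true).card = n from hAcard]
      rw [hc]; field_simp
  · -- upper bound
    rintro v ⟨φ, h0, h1, h2, rfl⟩
    set x : Fin (n^2+1) → Fin n → ℝ :=
      fun θ i => ∑ S : Finset (Fin n), if i ∈ S then φ θ S else 0 with hx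
    have hx0 : ∀ θ i, 0 ≤ x θ i := by
      intro θ i
      refine Finset.sum_nonneg fun S _ => ?_
      split
      · exact h0 θ S
      · exact le_refl 0
    have hx1 : ∀ θ i, x θ i ≤ 1 := by
      intro θ i
      calc x θ i ≤ ∑ S : Finset (Fin n), φ θ S := by
            refine Finset.sum_le_sum fun S _ => ?_
            split
            · exact le_refl _
            · exact h0 θ S
        _ = 1 := h1 θ
    have hpers : ∀ i, ∑ θ ∈ Finset.univ.erase (0 : Fin (n^2+1)), x θ i ≤ 1 := by
      intro i
      have h := h2 i
      have e1 : ∑ θ : Fin (n^2+1), c * x θ i * (if θ = 0 then 1 else -1)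
          = (∑ θ ∈ Finset.univ.erase (0 : Fin (n^2+1)), -(c * x θ i)) + c * x 0 i := by
        rw [← Finset.sum_erase_add _ _ (Finset.mem_univ (0 : Fin (n^2+1)))]
        congr 1
        · refine Finset.sum_congr rfl fun θ hθ => ?_
          rw [if_neg (Finset.ne_of_mem_erase hθ), mul_neg_one]
        · simp
      rw [e1] at h
      have h3 : c * ∑ θ ∈ Finset.univ.erase (0 : Fin (n^2+1)), x θ i ≤ c * 1 := by
        have : c * ∑ θ ∈ Finset.univ.erase (0 : Fin (n^2+1)), x θ i ≤ c * x 0 i := by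
          have := h
          rw [Finset.sum_neg_distrib, ← Finset.mul_sum] at this
          linarith
        calc _ ≤ c * x 0 i := this
          _ ≤ c * 1 := by
            have := hx1 0 i
            nlinarith
      exact le_of_mul_le_mul_left h3 hcpos
    have inner : ∀ θ : Fin (n^2+1),
        (∑ S : Finset (Fin n), φ θ S * (if A θ = true ∧ S ≠ ∅ then 1 else 0))
          ≤ if A θ = true then ∑ i : Fin n, x θ i else 0 := by
      intro θ
      by_cases hA : A θ = true
      · simp only [hA, true_and, if_true]
        have swap : ∑ i : Fin n, x θ i = ∑ S : Finset (Fin n), (S.card : ℝ) * φ θ S := by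
          rw [hx, Finset.sum_comm]
          refine Finset.sum_congr rfl fun S _ => ?_
          rw [Finset.sum_ite_mem, Finset.univ_inter, Finset.sum_const, nsmul_eq_mul]
        rw [swap]
        refine Finset.sum_le_sum fun S _ => ?_
        by_cases hS : S = ∅
        · simp [hS]
        · rw [if_pos hS, mul_one]
          have h1S : (1:ℝ) ≤ (S.card : ℝ) := by
            have : 1 ≤ S.card := Finset.card_pos.mpr (Finset.nonempty_of_ne_empty hS)
            exact_mod_cast this
          nlinarith [h0 θ S]
      · refine le_trans (le_of_eq (Finset.sum_eq_zero fun S _ => by simp [hA])) (by simp [hA])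
    calc ∑ θ : Fin (n^2+1), c * ∑ S : Finset (Fin n), φ θ S * (if A θ = true ∧ S ≠ ∅ then 1 else 0)
        ≤ ∑ θ : Fin (n^2+1), c * (if A θ = true then ∑ i : Fin n, x θ i else 0) := by
          refine Finset.sum_le_sum fun θ _ => ?_
          exact mul_le_mul_of_nonneg_left (inner θ) (le_of_lt hcpos)
      _ = ∑ i : Fin n, ∑ θ : Fin (n^2+1), (if A θ = true then c * x θ i else 0) := by
          rw [Finset.sum_comm]
          refine Finset.sum_congr rfl fun θ _ => ?_
          by_cases hA : A θ = true
          · simp [hA, Finset.mul_sum]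
          · simp [hA]
      _ ≤ ∑ i : Fin n, c := by
          refine Finset.sum_le_sum fun i _ => ?_
          have e2 : ∑ θ : Fin (n^2+1), (if A θ = true then c * x θ i else 0)
              = ∑ θ ∈ Finset.univ.erase (0 : Fin (n^2+1)), (if A θ = true then c * x θ i else 0) := by
            rw [← Finset.sum_erase_add _ _ (Finset.mem_univ (0 : Fin (n^2+1)))]
            simp [hA0]
          rw [e2]
          calc ∑ θ ∈ Finset.univ.erase (0 : Fin (n^2+1)), (if A θ = true then c * x θ i else 0)
              ≤ ∑ θ ∈ Finset.univ.erase (0 : Fin (n^2+1)), c * x θ i := by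
                refine Finset.sum_le_sum fun θ _ => ?_
                split
                · exact le_refl _
                · exact mul_nonneg (le_of_lt hcpos) (hx0 θ i)
            _ = c * ∑ θ ∈ Finset.univ.erase (0 : Fin (n^2+1)), x θ i := by
                rw [Finset.mul_sum]
            _ ≤ c * 1 := mul_le_mul_of_nonneg_left (hpers i) (le_of_lt hcpos)
            _ = c := mul_one c
      _ = n * c := by simp [mul_comm]
      _ = (n : ℝ) / ((n : ℝ) ^ 2 + 1) := by rw [hc]; field_simp
end
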